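/- arXiv:1108.5123 — 6 statements merged into one kernel-verified Lean document; each statement's English description precedes it below -/
import Mathlib

section
/- Every regularly preordered space has a closed preorder, i.e., the graph {(x,y) : x ≤ y} is closed in E × E. -/
open Set

def IsIncreasingSet {E : Type*} [Preorder E] (S : Set E) : Prop :=
  ∀ ⦃x⦄, x ∈ S → ∀ ⦃y⦄, x ≤ y → y ∈ S
def IsDecreasingSet {E : Type*} [Preorder E] (S : Set E) : Prop :=
  ∀ ⦃x⦄, x ∈ S → ∀ ⦃y⦄, y ≤ x → y ∈ S

def SemiclosedPreordered (E : Type*) [TopologicalSpace E] [Preorder E] : Prop :=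
  ∀ x : E, IsClosed {y | x ≤ y} ∧ IsClosed {y | y ≤ x}

def RegularlyPreordered (E : Type*) [TopologicalSpace E] [Preorder E] : Prop :=
  SemiclosedPreordered E ∧
  (∀ (x : E) (B : Set E), IsClosed B → IsIncreasingSet B → x ∉ B →
    ∃ U V : Set E, IsOpen U ∧ IsDecreasingSet U ∧ IsOpen V ∧ IsIncreasingSet V ∧
      x ∈ U ∧ B ⊆ V ∧ Disjoint U V) ∧
  (∀ (y : E) (A : Set E), IsClosed A → IsDecreasingSet A → y ∉ A →
    ∃ U V : Set E, IsOpen U ∧ IsDecreasingSet U ∧ IsOpen V ∧ IsIncreasingSet V ∧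
      y ∈ V ∧ A ⊆ U ∧ Disjoint U V)

/-!
If `x ≰ y`, regularity separates `y` from the closed increasing set `i(x) = {z | x ≤ z}` by
disjoint open sets `U ∋ y` and `V ⊇ i(x)` with `V` increasing. Then `V ×ˢ U` is a neighbourhood
of `(x, y)` missing the graph: `a ∈ V` and `a ≤ b` would put `b` in `V`, hence outside `U`.
-/

theorem isIncreasingSet_setOf_le {E : Type*} [Preorder E] (x : E) :
    IsIncreasingSet {z : E | x ≤ z} :=
  fun _ hxa _ hab => hxa.trans hab

theorem IsIncreasingSet.not_le_of_disjoint {E : Type*} [Preorder E] {U V : Set E}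
    (hV : IsIncreasingSet V) (hUV : Disjoint U V) {a b : E} (ha : a ∈ V) (hb : b ∈ U) :
    ¬ a ≤ b :=
  fun hab => hUV.ne_of_mem hb (hV ha hab) rfl

theorem isClosed_setOf_le_of_separated {E : Type*} [TopologicalSpace E] [Preorder E]
    (hsep : ∀ x y : E, ¬ x ≤ y → ∃ U V : Set E, IsOpen U ∧ IsOpen V ∧ IsIncreasingSet V ∧
      y ∈ U ∧ x ∈ V ∧ Disjoint U V) :
    IsClosed {p : E × E | p.1 ≤ p.2} := by
  refine isOpen_compl_iff.mp (isOpen_iff_forall_mem_open.mpr ?_)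
  rintro ⟨x, y⟩ hxy
  obtain ⟨U, V, hU, hV, hV_inc, hyU, hxV, hUV⟩ := hsep x y hxy
  exact ⟨V ×ˢ U, fun p hp => hV_inc.not_le_of_disjoint hUV hp.1 hp.2, hV.prod hU, hxV, hyU⟩

theorem RegularlyPreordered.separated_of_not_le {E : Type*} [TopologicalSpace E] [Preorder E]
    (h : RegularlyPreordered E) {x y : E} (hxy : ¬ x ≤ y) :
    ∃ U V : Set E, IsOpen U ∧ IsOpen V ∧ IsIncreasingSet V ∧ y ∈ U ∧ x ∈ V ∧ Disjoint U V := by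
  obtain ⟨hsemi, hsep, -⟩ := h
  obtain ⟨U, V, hU, -, hV, hV_inc, hyU, hxV, hUV⟩ :=
    hsep y _ (hsemi x).1 (isIncreasingSet_setOf_le x) hxy
  exact ⟨U, V, hU, hV, hV_inc, hyU, hxV le_rfl, hUV⟩

theorem regularlyPreordered_implies_closed_graph
    (E : Type*) [TopologicalSpace E] [Preorder E]
    (h : RegularlyPreordered E) :
    IsClosed {p : E × E | p.1 ≤ p.2} :=
  isClosed_setOf_le_of_separated fun _ _ => h.separated_of_not_le
end

section
/- Let E be a topological preordered space and suppose local convexity holds at x ∈ E (every neighborhood of x contains a convex neighborhood of x). Then the equivalence class [x] = i(x) ∩ d(x) is compact, and every open neighborhood of x contains [x]. -/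
/-!
An order-convex set `A ∩ B` containing `x` contains its whole class `[x]`, so local convexity
puts `[x]` inside every neighbourhood of `x`. A set containing `x` and lying inside every
neighbourhood of `x` is compact, since every filter on it converges to `x`.
-/

open Set Topology

def IsOrderConvexSet {E : Type*} [Preorder E] (S : Set E) : Prop :=
  ∃ A B : Set E, IsIncreasingSet A ∧ IsDecreasingSet B ∧ S = A ∩ B

open Filter

theorem IsOrderConvexSet.setOf_le_and_le_subset {E : Type*} [Preorder E] {C : Set E} {x : E}
    (hC : IsOrderConvexSet C) (hx : x ∈ C) : {y : E | x ≤ y ∧ y ≤ x} ⊆ C := by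
  obtain ⟨A, B, hA, hB, rfl⟩ := hC
  exact fun y hy ↦ ⟨hA hx.1 hy.1, hB hx.2 hy.2⟩

theorem principal_setOf_le_and_le_le_nhds {E : Type*} [TopologicalSpace E] [Preorder E] {x : E}
    (hconv : ∀ O ∈ 𝓝 x, ∃ C ∈ 𝓝 x, IsOrderConvexSet C ∧ C ⊆ O) :
    𝓟 {y : E | x ≤ y ∧ y ≤ x} ≤ 𝓝 x := by
  intro O hO
  obtain ⟨C, hCx, hC, hCO⟩ := hconv O hO
  exact (hC.setOf_le_and_le_subset (mem_of_mem_nhds hCx)).trans hCO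

theorem isCompact_of_mem_of_principal_le_nhds {X : Type*} [TopologicalSpace X] {s : Set X}
    {x : X} (hx : x ∈ s) (hs : 𝓟 s ≤ 𝓝 x) : IsCompact s :=
  fun _ _ hf ↦ ⟨x, hx, ClusterPt.of_le_nhds (hf.trans hs)⟩

theorem locallyConvexAt_implies_class_compact
    {E : Type*} [TopologicalSpace E] [Preorder E] (x : E)
    (hconv : ∀ O ∈ 𝓝 x, ∃ C ∈ 𝓝 x, IsOrderConvexSet C ∧ C ⊆ O) :
    IsCompact {y : E | x ≤ y ∧ y ≤ x} ∧
      ∀ O : Set E, IsOpen O → x ∈ O → {y : E | x ≤ y ∧ y ≤ x} ⊆ O := by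
  have hle := principal_setOf_le_and_le_le_nhds hconv
  exact ⟨isCompact_of_mem_of_principal_le_nhds ⟨le_rfl, le_rfl⟩ hle,
    fun O hO hxO ↦ hle (hO.mem_nhds hxO)⟩
end

section
/- If E is a locally convex topological preordered space, then every open set O ⊆ E is saturated with respect to the quotient map π : E → E/∼ (i.e., π⁻¹(π(O)) = O); consequently π is an open, closed, proper quasi-homeomorphism. -/
open Set Topology

/-- the quotient topology on `E/∼` -/
instance {E : Type*} [TopologicalSpace E] [Preorder E] :
    TopologicalSpace (Antisymmetrization E (· ≤ ·)) :=
  inferInstanceAs (TopologicalSpace (Quotient (AntisymmRel.setoid E (· ≤ ·))))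

/-!
An order-convex set `A ∩ B` containing `x` contains every `y ∼ x`, since `A` is increasing and
`B` decreasing. Local convexity therefore makes `∼`-equivalent points topologically
inseparable. A quotient map identifying only inseparable points is inducing, and a surjective
inducing map is open, closed, proper and a quasi-homeomorphism.
-/

section InseparableQuotient

variable {X Y : Type*} [TopologicalSpace X] {f : X → Y}

lemma preimage_image_eq_of_isOpen_of_inseparable (hf : ∀ x y, f x = f y → Inseparable x y)
    {U : Set X} (hU : IsOpen U) : f ⁻¹' (f '' U) = U := by
  refine Subset.antisymm ?_ (subset_preimage_image f U)
  rintro x ⟨y, hy, hyx⟩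
  exact ((hf y x hyx).mem_open_iff hU).1 hy

lemma Topology.IsQuotientMap.isInducing_of_inseparable [TopologicalSpace Y] (hf : IsQuotientMap f)
    (hsep : ∀ x y, f x = f y → Inseparable x y) : IsInducing f := by
  refine ⟨le_antisymm hf.continuous.le_induced fun U hU => ⟨f '' U, ?_, ?_⟩⟩
  · rw [← hf.isOpen_preimage, preimage_image_eq_of_isOpen_of_inseparable hsep hU]
    exact hU
  · exact preimage_image_eq_of_isOpen_of_inseparable hsep hU

end InseparableQuotient

lemma IsOrderConvexSet.mem_of_antisymmRel {E : Type*} [Preorder E] {C : Set E}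
    (hC : IsOrderConvexSet C) {x y : E} (hx : x ∈ C) (hxy : AntisymmRel (· ≤ ·) x y) : y ∈ C := by
  obtain ⟨A, B, hA, hB, rfl⟩ := hC
  exact ⟨hA hx.1 hxy.1, hB hx.2 hxy.2⟩

lemma inseparable_of_antisymmRel {E : Type*} [TopologicalSpace E] [Preorder E]
    (hconv : ∀ x : E, ∀ O ∈ 𝓝 x, ∃ C ∈ 𝓝 x, IsOrderConvexSet C ∧ C ⊆ O)
    {x y : E} (hxy : AntisymmRel (· ≤ ·) x y) : Inseparable x y := by
  have mem_of_mem : ∀ {a b : E}, AntisymmRel (· ≤ ·) a b → ∀ O, IsOpen O → a ∈ O → b ∈ O := by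
    intro a b hab O hO ha
    obtain ⟨C, hC, hCconv, hCO⟩ := hconv a O (hO.mem_nhds ha)
    exact hCO (hCconv.mem_of_antisymmRel (mem_of_mem_nhds hC) hab)
  exact inseparable_iff_forall_isOpen.2 fun O hO => ⟨mem_of_mem hxy O hO, mem_of_mem hxy.symm O hO⟩

theorem locallyConvex_quotient_quasiHomeomorphism
    {E : Type*} [TopologicalSpace E] [Preorder E]
    (hconv : ∀ x : E, ∀ O ∈ 𝓝 x, ∃ C ∈ 𝓝 x, IsOrderConvexSet C ∧ C ⊆ O) :
    (∀ O : Set E, IsOpen O →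
      (toAntisymmetrization (α := E) (· ≤ ·)) ⁻¹'
        ((toAntisymmetrization (α := E) (· ≤ ·)) '' O) = O) ∧
    IsOpenMap (toAntisymmetrization (α := E) (· ≤ ·)) ∧
    IsClosedMap (toAntisymmetrization (α := E) (· ≤ ·)) ∧
    (∀ K : Set (Antisymmetrization E (· ≤ ·)), IsCompact K →
      IsCompact ((toAntisymmetrization (α := E) (· ≤ ·)) ⁻¹' K)) ∧
    (∀ C : Set E, IsClosed C →
      (toAntisymmetrization (α := E) (· ≤ ·)) ⁻¹'
        (closure ((toAntisymmetrization (α := E) (· ≤ ·)) '' C)) = C) ∧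
    (∀ F : Set (Antisymmetrization E (· ≤ ·)), IsClosed F →
      closure ((toAntisymmetrization (α := E) (· ≤ ·)) ''
        ((toAntisymmetrization (α := E) (· ≤ ·)) ⁻¹' F)) = F) := by
  set π := toAntisymmetrization (α := E) (· ≤ ·)
  have hq : IsQuotientMap π := isQuotientMap_quotient_mk'
  have hsep : ∀ x y, π x = π y → Inseparable x y := fun x y h =>
    inseparable_of_antisymmRel hconv (Quotient.exact h)
  have hind : IsInducing π := hq.isInducing_of_inseparable hsep
  have hrange : range π = univ := hq.surjective.range_eq
  refine ⟨fun O hO => preimage_image_eq_of_isOpen_of_inseparable hsep hO,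
    hind.isOpenMap (hrange ▸ isOpen_univ), hind.isClosedMap (hrange ▸ isClosed_univ),
    fun K hK => hind.isCompact_preimage (hrange ▸ isClosed_univ) hK, fun C hC => ?_,
    fun F hF => ?_⟩
  · rw [← hind.closure_eq_preimage_closure_image, hC.closure_eq]
  · rw [image_preimage_eq F hq.surjective, hF.closure_eq]
end

section
/- If E is a locally convex closed preordered space (the graph of ≤ is closed and E is locally convex), then the quotient order ≲ on E/∼ is closed: its graph is closed in (E/∼) × (E/∼). -/
open Set Topology

/-!
A convex set `A ∩ B` (`A` increasing, `B` decreasing) is saturated for `∼`, so in a locally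
convex space every open set is saturated and the quotient map `E → E/∼` is open. The product of
two open quotient maps is again a quotient map, and the graph of `≲` pulls back to the closed
graph of `≤`.
-/

section

variable {E : Type*} [Preorder E]

lemma IsOrderConvexSet.mem_of_antisymmRel_s14 {C : Set E} (hC : IsOrderConvexSet C) {z w : E}
    (hzw : AntisymmRel (· ≤ ·) z w) (hw : w ∈ C) : z ∈ C := by
  obtain ⟨A, B, hA, hB, rfl⟩ := hC
  exact ⟨hA hw.1 hzw.2, hB hw.2 hzw.1⟩

variable [TopologicalSpace E]

lemma IsOpen.mem_of_antisymmRel_s14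
    (hconv : ∀ x : E, ∀ O ∈ 𝓝 x, ∃ C ∈ 𝓝 x, IsOrderConvexSet C ∧ C ⊆ O)
    {O : Set E} (hO : IsOpen O) {z w : E} (hzw : AntisymmRel (· ≤ ·) z w) (hw : w ∈ O) :
    z ∈ O := by
  obtain ⟨C, hC, hC_convex, hCO⟩ := hconv w O (hO.mem_nhds hw)
  exact hCO (hC_convex.mem_of_antisymmRel_s14 hzw (mem_of_mem_nhds hC))

lemma isOpenQuotientMap_toAntisymmetrization
    (hconv : ∀ x : E, ∀ O ∈ 𝓝 x, ∃ C ∈ 𝓝 x, IsOrderConvexSet C ∧ C ⊆ O) :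
    IsOpenQuotientMap (toAntisymmetrization (α := E) (· ≤ ·)) := by
  refine ⟨Quot.mk_surjective, continuous_quot_mk, fun U hU => ?_⟩
  have hsat : toAntisymmetrization (· ≤ ·) ⁻¹' (toAntisymmetrization (· ≤ ·) '' U) = U := by
    refine Subset.antisymm ?_ (subset_preimage_image _ _)
    rintro z ⟨w, hw, hwz⟩
    exact hU.mem_of_antisymmRel_s14 hconv (Quotient.exact hwz.symm) hw
  change IsOpen (toAntisymmetrization (· ≤ ·) ⁻¹' (toAntisymmetrization (· ≤ ·) '' U))
  rwa [hsat]

lemma isClosed_le_antisymmetrization_of_isOpenQuotientMap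
    (hclosed : IsClosed {p : E × E | p.1 ≤ p.2})
    (hq : IsOpenQuotientMap (toAntisymmetrization (α := E) (· ≤ ·))) :
    IsClosed {p : Antisymmetrization E (· ≤ ·) × Antisymmetrization E (· ≤ ·) | p.1 ≤ p.2} :=
  (hq.prodMap hq).isQuotientMap.isClosed_preimage.1 hclosed

end

theorem quotient_order_closed_of_locallyConvex_closedPreorder
    {E : Type*} [TopologicalSpace E] [Preorder E]
    (hclosed : IsClosed {p : E × E | p.1 ≤ p.2})
    (hconv : ∀ x : E, ∀ O ∈ 𝓝 x, ∃ C ∈ 𝓝 x, IsOrderConvexSet C ∧ C ⊆ O) :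
    IsClosed {p : Antisymmetrization E (· ≤ ·) × Antisymmetrization E (· ≤ ·) |
      p.1 ≤ p.2} :=
  isClosed_le_antisymmetrization_of_isOpenQuotientMap hclosed
    (isOpenQuotientMap_toAntisymmetrization hconv)
end

section
/- In a locally convex semiclosed preordered space E, the relation ∼ (x ∼ y iff x ≤ y and y ≤ x) coincides with topological indistinguishability (x and y have the same closure), so the quotient π : E → E/∼ is the Kolmogorov (T₀) quotient; moreover E/∼ is T₁. -/
open Set Topology

/-!
An order-convex neighbourhood of `y` contains every `x ∼ y`, so `∼`-equivalent points have the
same neighbourhoods. Conversely, if `x` and `y` are inseparable then `x` lies in the closed sets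
`i(y)` and `d(y)`, i.e. `x ∼ y`. The fibre of `E → E/∼` over `[x]` is `i(x) ∩ d(x)`, which is
closed, so points of the quotient are closed.
-/

section

variable {E : Type*} [Preorder E]

theorem IsOrderConvexSet.mem_of_le_of_le {C : Set E} (hC : IsOrderConvexSet C) {a b x : E}
    (ha : a ∈ C) (hb : b ∈ C) (hax : a ≤ x) (hxb : x ≤ b) : x ∈ C := by
  obtain ⟨A, B, hA, hB, rfl⟩ := hC
  exact ⟨hA ha.1 hax, hB hb.2 hxb⟩

theorem preimage_toAntisymmetrization_singleton (x : E) :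
    toAntisymmetrization (· ≤ ·) ⁻¹' {toAntisymmetrization (· ≤ ·) x} = Ici x ∩ Iic x := by
  ext y
  exact Quotient.eq.trans and_comm

variable [TopologicalSpace E]

theorem AntisymmRel.specializes_of_locallyOrderConvex
    (hconv : ∀ x : E, ∀ O ∈ 𝓝 x, ∃ C ∈ 𝓝 x, IsOrderConvexSet C ∧ C ⊆ O) {x y : E}
    (h : AntisymmRel (· ≤ ·) x y) : x ⤳ y := by
  refine specializes_iff_forall_open.2 fun O hO hyO => ?_
  obtain ⟨C, hCy, hC, hCO⟩ := hconv y O (hO.mem_nhds hyO)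
  have hyC : y ∈ C := mem_of_mem_nhds hCy
  exact hCO (hC.mem_of_le_of_le hyC hyC h.ge h.le)

theorem AntisymmRel.inseparable_of_locallyOrderConvex
    (hconv : ∀ x : E, ∀ O ∈ 𝓝 x, ∃ C ∈ 𝓝 x, IsOrderConvexSet C ∧ C ⊆ O) {x y : E}
    (h : AntisymmRel (· ≤ ·) x y) : Inseparable x y :=
  inseparable_iff_specializes_and.2
    ⟨h.specializes_of_locallyOrderConvex hconv, h.symm.specializes_of_locallyOrderConvex hconv⟩

theorem Specializes.le [ClosedIciTopology E] {x y : E} (h : x ⤳ y) : x ≤ y :=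
  h.mem_closed isClosed_Ici self_mem_Ici

theorem Specializes.ge [ClosedIicTopology E] {x y : E} (h : x ⤳ y) : y ≤ x :=
  h.mem_closed isClosed_Iic self_mem_Iic

theorem Inseparable.antisymmRel [ClosedIciTopology E] [ClosedIicTopology E] {x y : E}
    (h : Inseparable x y) : AntisymmRel (· ≤ ·) x y :=
  ⟨h.specializes.le, h.specializes.ge⟩

theorem isQuotientMap_toAntisymmetrization :
    IsQuotientMap (toAntisymmetrization (α := E) (· ≤ ·)) :=
  isQuotientMap_quotient_mk'

instance Antisymmetrization.t1Space [ClosedIciTopology E] [ClosedIicTopology E] :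
    T1Space (Antisymmetrization E (· ≤ ·)) := by
  refine ⟨fun a => ?_⟩
  induction a using Antisymmetrization.ind with | _ x
  rw [← isQuotientMap_toAntisymmetrization.isClosed_preimage,
    preimage_toAntisymmetrization_singleton]
  exact isClosed_Ici.inter isClosed_Iic

end

theorem locallyConvex_semiclosed_quotient_is_T0_quotient
    {E : Type*} [TopologicalSpace E] [Preorder E]
    (hsemi : ∀ x : E, IsClosed {y | x ≤ y} ∧ IsClosed {y | y ≤ x})
    (hconv : ∀ x : E, ∀ O ∈ 𝓝 x, ∃ C ∈ 𝓝 x, IsOrderConvexSet C ∧ C ⊆ O) :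
    (∀ x y : E, (x ≤ y ∧ y ≤ x) ↔ Inseparable x y) ∧
      T1Space (Antisymmetrization E (· ≤ ·)) := by
  have : ClosedIciTopology E := ⟨fun x => (hsemi x).1⟩
  have : ClosedIicTopology E := ⟨fun x => (hsemi x).2⟩
  exact ⟨fun x y => ⟨AntisymmRel.inseparable_of_locallyOrderConvex hconv,
    Inseparable.antisymmRel⟩, inferInstance⟩
end

section
/- Let E be a second countable locally compact space equipped with a locally convex closed preorder. Then E is pseudo-metrizable, i.e., its topology is induced by a pseudo-metric. -/
/-! Since the graph of `≤` is closed, points whose neighbourhood filters meet satisfy `x ≤ y ≤ x`.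
Local order-convexity puts every such `x` in each neighbourhood of `y`, so `x ⤳ y`. Hence `E` is
`R1`; an `R1` locally compact space is regular, and a regular second countable space is
pseudo-metrizable by Urysohn's metrization theorem. -/

open Set Topology

open Filter

theorem le_of_not_disjoint_nhds {E : Type*} [TopologicalSpace E] [Preorder E]
    [OrderClosedTopology E] {x y : E} (h : ¬Disjoint (𝓝 x) (𝓝 y)) : x ≤ y :=
  have : NeBot (𝓝 x ⊓ 𝓝 y) := ⟨fun hbot => h (disjoint_iff.2 hbot)⟩
  le_of_tendsto_of_tendsto' (tendsto_id.mono_left inf_le_left)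
    (tendsto_id.mono_left inf_le_right) fun _ => le_rfl

theorem specializes_of_le_of_le_of_orderConvex_nhds {E : Type*} [TopologicalSpace E]
    [Preorder E] {x y : E} (hconv : ∀ O ∈ 𝓝 y, ∃ C ∈ 𝓝 y, IsOrderConvexSet C ∧ C ⊆ O)
    (hxy : x ≤ y) (hyx : y ≤ x) : x ⤳ y := by
  rw [specializes_iff_forall_open]
  intro s hs hys
  obtain ⟨C, hC, ⟨A, B, hA, hB, rfl⟩, hCs⟩ := hconv s (hs.mem_nhds hys)
  obtain ⟨hyA, hyB⟩ := mem_of_mem_nhds hC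
  exact hCs ⟨hA hyA hyx, hB hyB hxy⟩

theorem r1Space_of_orderConvex_nhds {E : Type*} [TopologicalSpace E] [Preorder E]
    [OrderClosedTopology E] (hconv : ∀ x : E, ∀ O ∈ 𝓝 x, ∃ C ∈ 𝓝 x, IsOrderConvexSet C ∧ C ⊆ O) :
    R1Space E where
  specializes_or_disjoint_nhds x y := by
    by_cases hd : Disjoint (𝓝 x) (𝓝 y)
    · exact Or.inr hd
    · exact Or.inl <| specializes_of_le_of_le_of_orderConvex_nhds (hconv y)
        (le_of_not_disjoint_nhds hd) (le_of_not_disjoint_nhds fun h => hd h.symm)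

theorem pseudoMetrizable_of_secondCountable_locallyCompact_locallyConvex_closedPreorder
    (E : Type*) [TopologicalSpace E] [Preorder E] [SecondCountableTopology E]
    (hloc : ∀ x : E, ∃ K : Set E, IsCompact K ∧ K ∈ 𝓝 x)
    (hconv : ∀ x : E, ∀ O ∈ 𝓝 x, ∃ C ∈ 𝓝 x, IsOrderConvexSet C ∧ C ⊆ O)
    (hclosed : IsClosed {p : E × E | p.1 ≤ p.2}) :
    TopologicalSpace.PseudoMetrizableSpace E := by
  have : OrderClosedTopology E := ⟨hclosed⟩
  have : R1Space E := r1Space_of_orderConvex_nhds hconv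
  have : WeaklyLocallyCompactSpace E := ⟨hloc⟩
  infer_instance
end
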